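/- arXiv:1710.02057 — 2 statements merged into one kernel-verified Lean document; each statement's English description precedes it below -/
import Mathlib

section
/- Let σ be a permutation of {1,…,n} which is the product of a list of k pairwise distinct simple transpositions. Then ℓ(σ) = k; that is, any expression of a permutation as a product of pairwise distinct simple transpositions is a reduced word. -/
/-- The number of inversions (the length) of a permutation of `{1,…,n}`. -/
def invCount {n : ℕ} (σ : Equiv.Perm (Fin n)) : ℕ :=
  (Finset.univ.filter fun p : Fin n × Fin n => p.1 < p.2 ∧ σ p.2 < σ p.1).card

/-- The number of orbits of `{1,…,n}` under the cyclic group generated by `σ`. -/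
noncomputable def orbitCount {n : ℕ} (σ : Equiv.Perm (Fin n)) : ℕ :=
  Nat.card (MulAction.orbitRel.Quotient (Subgroup.zpowers σ) (Fin n))

/-- A simple transposition: a swap of two consecutive integers `i` and `i+1`. -/
def IsSimpleTransposition {n : ℕ} (τ : Equiv.Perm (Fin n)) : Prop :=
  ∃ (i : ℕ) (h : i + 1 < n), τ = Equiv.swap ⟨i, Nat.lt_of_succ_lt h⟩ ⟨i + 1, h⟩

/-- `σ` is the product of a (possibly empty) list of pairwise distinct simple
transpositions. -/
def IsProdOfDistinctSimpleTranspositions {n : ℕ} (σ : Equiv.Perm (Fin n)) : Prop :=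
  ∃ l : List (Equiv.Perm (Fin n)),
    l.Nodup ∧ (∀ τ ∈ l, IsSimpleTransposition τ) ∧ σ = l.prod

/-! Right multiplication by an adjacent transposition `s_i = (i i+1)` moves positions `i` and
`i+1` past each other and keeps the relative order of every other pair, so it adds exactly the
inversion `(i, i+1)` when `σ i < σ (i+1)`. Write a word of distinct simple transpositions as
`w s_i` with `s_i` not a letter of `w`: every letter `s_j` of `w` has `j ≠ i`, hence preserves
`{0, …, i}`, and so does `w`. Thus `w i ≤ i < w (i+1)`, the last letter adds one inversion, and
induction on the word length gives `ℓ = k`. -/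

open Equiv Finset MulAction
open scoped Pointwise

lemma apply_lt_apply_of_mem_stabilizer_Iic {α : Type*} [LinearOrder α] {π : Perm α} {c x y : α}
    (hπ : π ∈ stabilizer (Perm α) (Set.Iic c)) (hx : x ≤ c) (hy : c < y) : π x < π y := by
  have hπx : π x ≤ c := (mem_stabilizer_set.1 hπ x).2 hx
  have hπy : ¬π y ≤ c := fun h => hy.not_ge ((mem_stabilizer_set.1 hπ y).1 h)
  exact hπx.trans_lt (not_le.1 hπy)

section
variable {n : ℕ}

def inversions (σ : Perm (Fin n)) : Finset (Fin n × Fin n) :=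
  univ.filter fun p => p.1 < p.2 ∧ σ p.2 < σ p.1

lemma invCount_eq_card_inversions (σ : Perm (Fin n)) : invCount σ = #(inversions σ) := rfl

@[simp]
lemma mem_inversions {σ : Perm (Fin n)} {p : Fin n × Fin n} :
    p ∈ inversions σ ↔ p.1 < p.2 ∧ σ p.2 < σ p.1 := by
  simp [inversions]

lemma invCount_one : invCount (1 : Perm (Fin n)) = 0 := by
  rw [invCount_eq_card_inversions, card_eq_zero, eq_empty_iff_forall_notMem]
  intro p hp
  rw [mem_inversions] at hp
  exact lt_asymm hp.1 hp.2

lemma card_erase_inversions_mul_swap (σ : Perm (Fin n)) {a b : Fin n} (hab : (a : ℕ) + 1 = b) :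
    #((inversions (σ * swap a b)).erase (a, b)) = #((inversions σ).erase (a, b)) :=
  card_equiv ((swap a b).prodCongr (swap a b)) fun ⟨p, q⟩ => by
    have hord : ¬(p = a ∧ q = b) ∧ p < q ↔
        ¬(swap a b p = a ∧ swap a b q = b) ∧ swap a b p < swap a b q := by
      rw [swap_apply_def, swap_apply_def]
      simp only [Fin.lt_def, Fin.ext_iff] at *
      split_ifs <;> omega
    simp only [mem_erase, mem_inversions, prodCongr_apply, Prod.map, Perm.mul_apply, ne_eq,
      Prod.mk.injEq, ← and_assoc, hord]

lemma invCount_mul_swap_of_lt {σ : Perm (Fin n)} {a b : Fin n} (hab : (a : ℕ) + 1 = b)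
    (h : σ a < σ b) : invCount (σ * swap a b) = invCount σ + 1 := by
  have hin : (a, b) ∈ inversions (σ * swap a b) := by
    rw [mem_inversions, Perm.mul_apply, Perm.mul_apply, swap_apply_left, swap_apply_right]
    exact ⟨Fin.lt_def.2 (by simp only; omega), h⟩
  have hout : (a, b) ∉ inversions σ := fun hm => lt_asymm h (mem_inversions.1 hm).2
  rw [invCount_eq_card_inversions, invCount_eq_card_inversions, ← card_erase_add_one hin,
    card_erase_inversions_mul_swap σ hab, erase_eq_of_notMem hout]

lemma swap_mem_stabilizer_Iic_of_ne {i j : ℕ} (hi : i < n) (hj : j + 1 < n) (hji : j ≠ i) :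
    swap (⟨j, Nat.lt_of_succ_lt hj⟩ : Fin n) ⟨j + 1, hj⟩ ∈
      stabilizer (Perm (Fin n)) (Set.Iic (⟨i, hi⟩ : Fin n)) := by
  simp only [swap_mem_stabilizer, Set.mem_Iic, Fin.mk_le_mk]
  omega

theorem invCount_list_prod_of_nodup {l : List (Perm (Fin n))} (hnd : l.Nodup)
    (hst : ∀ τ ∈ l, IsSimpleTransposition τ) : invCount l.prod = l.length := by
  induction l using List.reverseRecOn with
  | nil => exact invCount_one
  | append_singleton l τ ih =>
    obtain ⟨hl, -, hτ⟩ := List.nodup_append.1 hnd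
    obtain ⟨i, hi, rfl⟩ := hst τ (by simp)
    have hstab :
        l.prod ∈ stabilizer (Perm (Fin n)) (Set.Iic (⟨i, Nat.lt_of_succ_lt hi⟩ : Fin n)) := by
      refine Subgroup.list_prod_mem _ fun τ hτl => ?_
      obtain ⟨j, hj, rfl⟩ := hst τ (by simp [hτl])
      refine swap_mem_stabilizer_Iic_of_ne _ hj fun hji => ?_
      subst hji
      exact hτ _ hτl _ (List.mem_singleton_self _) rfl
    have hlt : l.prod ⟨i, Nat.lt_of_succ_lt hi⟩ < l.prod ⟨i + 1, hi⟩ :=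
      apply_lt_apply_of_mem_stabilizer_Iic hstab le_rfl (Fin.lt_def.2 (Nat.lt_succ_self i))
    rw [List.prod_append, List.prod_singleton, List.length_append, List.length_singleton,
      invCount_mul_swap_of_lt rfl hlt, ih hl fun τ hτl => hst τ (by simp [hτl])]

end

/-- If σ is the product of a list of k pairwise distinct simple transpositions,
then ℓ(σ) = k: any such expression is a reduced word. -/
theorem invCount_eq_of_prod_distinct_simple_transpositions (n k : ℕ)
    (σ : Equiv.Perm (Fin n)) (l : List (Equiv.Perm (Fin n)))
    (hlen : l.length = k) (hnd : l.Nodup)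
    (hst : ∀ τ ∈ l, IsSimpleTransposition τ) (hσ : σ = l.prod) :
    invCount σ = k := by
  rw [hσ, ← hlen]
  exact invCount_list_prod_of_nodup hnd hst
end

section
/- Let σ be a permutation of {1,…,n} and write σ = σ_1 ⋯ σ_r as a product of pairwise disjoint cycles. Then σ is a product of pairwise distinct simple transpositions if and only if each cycle σ_i (for i = 1,…,r) is a product of pairwise distinct simple transpositions. -/
/-! A word `s_{i₁} ⋯ s_{iₖ}` in distinct simple transpositions splits at the gaps of its index
set into subwords whose index sets are intervals; subwords on different intervals commute and
have disjoint supports. A subword with index set `[a, b]` multiplies to a cycle moving exactly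
`a, …, b + 1`: the letter `s_b` commutes with every other letter except `s_{b-1}`, so it can be
moved to one end of the word, and multiplying a cycle by a transposition of a fixed point and a
moved point on either side extends the cycle by that fixed point. Hence the cycles of the product
are the products of the interval subwords, which gives `→` by uniqueness of the cycle
decomposition; and every letter moves only points moved by the product, so words for disjoint
permutations share no letter and can be concatenated, which gives `←`. -/

open Equiv Equiv.Perm

namespace Equiv.Perm

variable {α : Type*} [DecidableEq α] [Fintype α] {π : Perm α} {x y : α}

theorem support_swap_mul_of_apply_eq_self (hx : π x = x) (hy : π y ≠ y) :
    (swap x y * π).support = insert x π.support := by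
  have hxy : x ≠ y := by rintro rfl; exact hy hx
  have hgx : (swap x y * π) x = y := by simp [hx]
  have hgy : (swap x y * π) y = π y :=
    swap_apply_of_ne_of_ne (fun h => hxy (π.injective (hx.trans h.symm))) hy
  have key : π.support = (swap x y * π).support.erase x := by
    have := support_swap_mul_eq (swap x y * π) x <| by
      rw [hgx, hgy]; exact fun h => hxy (π.injective (hx.trans h.symm))
    rwa [hgx, ← mul_assoc, swap_mul_self, one_mul, Finset.sdiff_singleton_eq_erase] at this
  have hmem : x ∈ (swap x y * π).support := mem_support.2 (by rw [hgx]; exact hxy.symm)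
  rw [key, Finset.insert_erase hmem]

theorem IsCycle.swap_mul_of_apply_eq_self (hπ : π.IsCycle) (hx : π x = x) (hy : π y ≠ y) :
    (swap x y * π).IsCycle := by
  set g := swap x y * π
  have hxy : x ≠ y := by rintro rfl; exact hy hx
  have hgx : g x = y := by simp [g, hx]
  -- `g` agrees with `π` along the `π`-orbit of `y`, except where that orbit returns to `y`
  have horbit : ∀ k : ℕ, g.SameCycle y ((π ^ k) y) := by
    intro k
    induction k with
    | zero => exact SameCycle.refl _ _
    | succ k ih =>
      rw [pow_succ', mul_apply]
      by_cases hw : π ((π ^ k) y) = y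
      · rw [hw]
      · have hwx : π ((π ^ k) y) ≠ x := fun h => by
          have hmem : (π ^ k) y ∈ π.support := pow_apply_mem_support.2 (mem_support.2 hy)
          rw [π.injective (h.trans hx.symm)] at hmem
          exact mem_support.1 hmem hx
        have hgw : g ((π ^ k) y) = π ((π ^ k) y) := swap_apply_of_ne_of_ne hwx hw
        rwa [← hgw, sameCycle_apply_right]
  refine ⟨x, hgx ▸ hxy.symm, fun z hz => ?_⟩
  rw [← mem_support, support_swap_mul_of_apply_eq_self hx hy, Finset.mem_insert, mem_support] at hz
  rcases hz with rfl | hz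
  · exact SameCycle.refl _ _
  · obtain ⟨k, rfl⟩ := hπ.exists_pow_eq hy hz
    exact SameCycle.trans ⟨1, by simpa using hgx⟩ (horbit k)

omit [Fintype α] in
theorem mul_swap_eq_inv_swap_mul_inv : π * swap x y = (swap x y * π⁻¹)⁻¹ := by
  rw [mul_inv_rev, inv_inv, swap_inv]

theorem support_mul_swap_of_apply_eq_self (hx : π x = x) (hy : π y ≠ y) :
    (π * swap x y).support = insert x π.support := by
  rw [mul_swap_eq_inv_swap_mul_inv, support_inv, support_swap_mul_of_apply_eq_self, support_inv]
  · rwa [inv_eq_iff_eq, eq_comm]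
  · rwa [Ne, inv_eq_iff_eq, eq_comm]

theorem IsCycle.mul_swap_of_apply_eq_self (hπ : π.IsCycle) (hx : π x = x) (hy : π y ≠ y) :
    (π * swap x y).IsCycle := by
  rw [mul_swap_eq_inv_swap_mul_inv]
  refine (hπ.inv.swap_mul_of_apply_eq_self ?_ ?_).inv
  · rwa [inv_eq_iff_eq, eq_comm]
  · rwa [Ne, inv_eq_iff_eq, eq_comm]

end Equiv.Perm

theorem List.prod_map_filter_mul_prod_map_filter_not_of_commute {ι G : Type*} [Monoid G]
    (f : ι → G) (p : ι → Bool) (l : List ι)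
    (h : ∀ i ∈ l, ∀ j ∈ l, p i → ¬ p j → Commute (f i) (f j)) :
    ((l.filter p).map f).prod * ((l.filter (fun i => !p i)).map f).prod = (l.map f).prod := by
  induction l with
  | nil => simp
  | cons a t ih =>
    have ih := ih fun i hi j hj => h i (mem_cons_of_mem a hi) j (mem_cons_of_mem a hj)
    by_cases ha : p a
    · simp [ha, ← ih, mul_assoc]
    · have hcomm : Commute ((t.filter p).map f).prod (f a) :=
        Commute.list_prod_left _ _ fun g hg => by
          obtain ⟨i, hi, rfl⟩ := mem_map.1 hg
          exact h i (mem_cons_of_mem a (mem_filter.1 hi).1) a mem_cons_self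
            (mem_filter.1 hi).2 ha
      simp [ha, ← ih, ← mul_assoc, hcomm.eq]

-- Out-of-range indices give the identity, so lemmas about products carry `i + 1 < n`.
def simpleTransposition (n i : ℕ) : Perm (Fin n) :=
  if h : i + 1 < n then swap ⟨i, Nat.lt_of_succ_lt h⟩ ⟨i + 1, h⟩ else 1

def prodSimpleTranspositions (n : ℕ) (M : List ℕ) : Perm (Fin n) :=
  (M.map (simpleTransposition n)).prod

section SimpleTransposition

variable {n i j : ℕ}

theorem simpleTransposition_of_lt (h : i + 1 < n) :
    simpleTransposition n i = swap ⟨i, Nat.lt_of_succ_lt h⟩ ⟨i + 1, h⟩ :=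
  dif_pos h

theorem isSimpleTransposition_iff {τ : Perm (Fin n)} :
    IsSimpleTransposition τ ↔ ∃ i, i + 1 < n ∧ simpleTransposition n i = τ := by
  constructor
  · rintro ⟨i, h, rfl⟩
    exact ⟨i, h, simpleTransposition_of_lt h⟩
  · rintro ⟨i, h, rfl⟩
    exact ⟨i, h, simpleTransposition_of_lt h⟩

theorem simpleTransposition_apply_ne_self_iff (h : i + 1 < n) {x : Fin n} :
    simpleTransposition n i x ≠ x ↔ (x : ℕ) = i ∨ (x : ℕ) = i + 1 := by
  rw [simpleTransposition_of_lt h, swap_apply_ne_self_iff]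
  simp [Fin.ext_iff]

theorem eq_or_eq_succ_of_simpleTransposition_apply_ne_self {x : Fin n}
    (hx : simpleTransposition n i x ≠ x) : (x : ℕ) = i ∨ (x : ℕ) = i + 1 := by
  by_cases h : i + 1 < n
  · exact (simpleTransposition_apply_ne_self_iff h).1 hx
  · simp [simpleTransposition, h] at hx

theorem simpleTransposition_injOn :
    Set.InjOn (simpleTransposition n) {i | i + 1 < n} := by
  intro i hi j hj hij
  have hmoved := (simpleTransposition_apply_ne_self_iff (x := ⟨i, Nat.lt_of_succ_lt hi⟩) hi).2
    (Or.inl rfl)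
  rw [hij, simpleTransposition_apply_ne_self_iff hj] at hmoved
  have hmoved' := (simpleTransposition_apply_ne_self_iff (x := ⟨j, Nat.lt_of_succ_lt hj⟩) hj).2
    (Or.inl rfl)
  rw [← hij, simpleTransposition_apply_ne_self_iff hi] at hmoved'
  simp only at hmoved hmoved'
  omega

theorem disjoint_simpleTransposition (h : i + 2 ≤ j ∨ j + 2 ≤ i) :
    Disjoint (simpleTransposition n i) (simpleTransposition n j) := by
  intro x
  by_contra! hx
  have := eq_or_eq_succ_of_simpleTransposition_apply_ne_self hx.1
  have := eq_or_eq_succ_of_simpleTransposition_apply_ne_self hx.2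
  omega

end SimpleTransposition

section Products

variable {n : ℕ}

@[simp]
theorem prodSimpleTranspositions_nil : prodSimpleTranspositions n [] = 1 := rfl

@[simp]
theorem prodSimpleTranspositions_cons (i : ℕ) (M : List ℕ) :
    prodSimpleTranspositions n (i :: M) = simpleTransposition n i * prodSimpleTranspositions n M :=
  List.prod_cons

@[simp]
theorem prodSimpleTranspositions_append (M N : List ℕ) :
    prodSimpleTranspositions n (M ++ N) =
      prodSimpleTranspositions n M * prodSimpleTranspositions n N := by
  simp [prodSimpleTranspositions]

theorem exists_mem_of_prodSimpleTranspositions_apply_ne_self {M : List ℕ} {x : Fin n}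
    (hx : prodSimpleTranspositions n M x ≠ x) : ∃ i ∈ M, (x : ℕ) = i ∨ (x : ℕ) = i + 1 := by
  induction M with
  | nil => exact absurd rfl hx
  | cons j M ih =>
    by_cases hM : prodSimpleTranspositions n M x = x
    · rw [prodSimpleTranspositions_cons, mul_apply, hM] at hx
      exact ⟨j, List.mem_cons_self, eq_or_eq_succ_of_simpleTransposition_apply_ne_self hx⟩
    · obtain ⟨i, hi, hxi⟩ := ih hM
      exact ⟨i, List.mem_cons_of_mem j hi, hxi⟩

theorem disjoint_simpleTransposition_prodSimpleTranspositions {j : ℕ} {M : List ℕ}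
    (h : ∀ i ∈ M, i + 2 ≤ j ∨ j + 2 ≤ i) :
    Disjoint (simpleTransposition n j) (prodSimpleTranspositions n M) :=
  disjoint_prod_right _ fun τ hτ => by
    obtain ⟨i, hi, rfl⟩ := List.mem_map.1 hτ
    exact disjoint_simpleTransposition ((h i hi).symm)

theorem prodSimpleTranspositions_append_cons_eq_mul {j : ℕ} {M₁ M₂ : List ℕ}
    (h : ∀ i ∈ M₂, i + 2 ≤ j ∨ j + 2 ≤ i) :
    prodSimpleTranspositions n (M₁ ++ j :: M₂) =
      prodSimpleTranspositions n (M₁ ++ M₂) * simpleTransposition n j := by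
  simp only [prodSimpleTranspositions_append, prodSimpleTranspositions_cons, mul_assoc,
    (disjoint_simpleTransposition_prodSimpleTranspositions h).commute.eq]

theorem prodSimpleTranspositions_append_cons_eq_simpleTransposition_mul {j : ℕ}
    {M₁ M₂ : List ℕ} (h : ∀ i ∈ M₁, i + 2 ≤ j ∨ j + 2 ≤ i) :
    prodSimpleTranspositions n (M₁ ++ j :: M₂) =
      simpleTransposition n j * prodSimpleTranspositions n (M₁ ++ M₂) := by
  simp only [prodSimpleTranspositions_append, prodSimpleTranspositions_cons, ← mul_assoc,
    (disjoint_simpleTransposition_prodSimpleTranspositions h).commute.eq]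

theorem prodSimpleTranspositions_filter_mul {c : ℕ} {M : List ℕ} (hc : c + 1 ∉ M) :
    prodSimpleTranspositions n (M.filter (· ≤ c)) *
      prodSimpleTranspositions n (M.filter (c + 1 < ·)) = prodSimpleTranspositions n M := by
  have hfilter : M.filter (c + 1 < ·) = M.filter (fun i => !decide (i ≤ c)) :=
    List.filter_congr fun i hi => by
      have : i ≠ c + 1 := fun h => hc (h ▸ hi)
      simp only [decide_eq_decide, ← decide_not]
      omega
  rw [hfilter]
  refine List.prod_map_filter_mul_prod_map_filter_not_of_commute _ _ _ fun i _ j hj hi hj' => ?_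
  have : j ≠ c + 1 := fun h => hc (h ▸ hj)
  simp only [decide_eq_true_eq] at hi hj'
  exact (disjoint_simpleTransposition (by omega)).commute

theorem disjoint_prodSimpleTranspositions_filter (c : ℕ) (M : List ℕ) :
    Disjoint (prodSimpleTranspositions n (M.filter (· ≤ c)))
      (prodSimpleTranspositions n (M.filter (c + 1 < ·))) := by
  intro x
  by_contra! hx
  obtain ⟨i, hi, hxi⟩ := exists_mem_of_prodSimpleTranspositions_apply_ne_self hx.1
  obtain ⟨j, hj, hxj⟩ := exists_mem_of_prodSimpleTranspositions_apply_ne_self hx.2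
  simp only [List.mem_filter, decide_eq_true_eq] at hi hj
  omega

end Products

section Intervals

variable {n : ℕ}

theorem isCycle_prodSimpleTranspositions_of_interval {a b : ℕ} (hab : a ≤ b) (hbn : b + 1 < n)
    {M : List ℕ} (hM : M.Nodup) (hMab : ∀ i, i ∈ M ↔ a ≤ i ∧ i ≤ b) :
    (prodSimpleTranspositions n M).IsCycle ∧
      ∀ x : Fin n, prodSimpleTranspositions n M x ≠ x ↔ a ≤ (x : ℕ) ∧ (x : ℕ) ≤ b + 1 := by
  induction b, hab using Nat.le_induction generalizing M with
  | base =>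
    have hMa : M = [a] := List.perm_singleton.1 <|
      List.perm_of_nodup_nodup_toFinset_eq hM (List.nodup_singleton a) (by
        ext i; simp only [List.mem_toFinset, hMab, List.mem_singleton]; omega)
    subst hMa
    refine ⟨?_, fun x => ?_⟩
    · rw [prodSimpleTranspositions_cons, prodSimpleTranspositions_nil, mul_one,
        simpleTransposition_of_lt hbn]
      exact isCycle_swap (by simp [Fin.ext_iff])
    · rw [prodSimpleTranspositions_cons, prodSimpleTranspositions_nil, mul_one,
        simpleTransposition_apply_ne_self_iff hbn]
      omega
  | succ b hab ih =>
    obtain ⟨M₁, M₂, rfl⟩ := List.append_of_mem ((hMab (b + 1)).2 ⟨by omega, le_rfl⟩)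
    obtain ⟨hbM, hM'⟩ := List.nodup_cons.1 (List.nodup_middle.1 hM)
    have hM'ab : ∀ i, i ∈ M₁ ++ M₂ ↔ a ≤ i ∧ i ≤ b := fun i => by
      have hi := hMab i
      simp only [List.mem_append, List.mem_cons, or_left_comm (b := i = b + 1)] at hi hbM ⊢
      constructor
      · intro hiM
        have : i ≠ b + 1 := by rintro rfl; exact hbM hiM
        have := hi.1 (Or.inr hiM)
        omega
      · exact fun hab' => (hi.2 ⟨hab'.1, by omega⟩).resolve_left (by omega)
    obtain ⟨hπ, hπ_moves⟩ := ih (by omega) hM' hM'ab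
    set π := prodSimpleTranspositions n (M₁ ++ M₂)
    set x : Fin n := ⟨b + 2, hbn⟩
    set y : Fin n := ⟨b + 1, by omega⟩
    have hx : π x = x := by
      by_contra h
      have := (hπ_moves x).1 h
      simp only [x] at this
      omega
    have hy : π y ≠ y := (hπ_moves y).2 ⟨by simp [y]; omega, by simp [y]⟩
    have hswap : simpleTransposition n (b + 1) = swap x y := by
      rw [simpleTransposition_of_lt hbn, swap_comm]
    -- `s_{b+1}` commutes with every letter except `s_b`, so it moves to the end away from `s_b`
    have hprod : prodSimpleTranspositions n (M₁ ++ (b + 1) :: M₂) = swap x y * π ∨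
        prodSimpleTranspositions n (M₁ ++ (b + 1) :: M₂) = π * swap x y := by
      have hfar : ∀ i ∈ M₁ ++ M₂, i ≠ b → i + 2 ≤ b + 1 ∨ b + 1 + 2 ≤ i := fun i hi hib => by
        have := (hM'ab i).1 hi
        omega
      have hdisj := (List.nodup_append.1 hM').2.2
      rcases List.mem_append.1 ((hM'ab b).2 ⟨hab, le_rfl⟩) with hb | hb
      · exact .inr <| hswap ▸ prodSimpleTranspositions_append_cons_eq_mul fun i hi =>
          hfar i (List.mem_append_right M₁ hi) (hdisj b hb i hi).symm
      · exact .inl <| hswap ▸ prodSimpleTranspositions_append_cons_eq_simpleTransposition_mul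
          fun i hi => hfar i (List.mem_append_left M₂ hi) (hdisj i hi b hb)
    have hcycle : (prodSimpleTranspositions n (M₁ ++ (b + 1) :: M₂)).IsCycle ∧
        (prodSimpleTranspositions n (M₁ ++ (b + 1) :: M₂)).support = insert x π.support := by
      rcases hprod with h | h <;> rw [h]
      · exact ⟨hπ.swap_mul_of_apply_eq_self hx hy, support_swap_mul_of_apply_eq_self hx hy⟩
      · exact ⟨hπ.mul_swap_of_apply_eq_self hx hy, support_mul_swap_of_apply_eq_self hx hy⟩
    refine ⟨hcycle.1, fun z => ?_⟩
    rw [← mem_support, hcycle.2, Finset.mem_insert, mem_support, hπ_moves, Fin.ext_iff]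
    simp only [x]
    omega

end Intervals

@[elab_as_elim]
theorem List.Nodup.induction_on_gaps {p : List ℕ → Prop} {M : List ℕ} (hM : M.Nodup)
    (nil : p [])
    (interval : ∀ M a b, M.Nodup → a ≤ b → (∀ i, i ∈ M ↔ a ≤ i ∧ i ≤ b) → p M)
    (split : ∀ M c, c + 1 ∉ M → p (M.filter (· ≤ c)) → p (M.filter (c + 1 < ·)) → p M) :
    p M := by
  induction hlen : M.length using Nat.strong_induction_on generalizing M with
  | _ k ih =>
  rcases eq_or_ne M [] with rfl | hne
  · exact nil
  have hI : M.toFinset.Nonempty := List.toFinset_nonempty_iff M |>.2 hne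
  set a := M.toFinset.min' hI
  set b := M.toFinset.max' hI
  have ha : a ∈ M := List.mem_toFinset.1 (M.toFinset.min'_mem hI)
  have hb : b ∈ M := List.mem_toFinset.1 (M.toFinset.max'_mem hI)
  have hbounds : ∀ i ∈ M, a ≤ i ∧ i ≤ b := fun i hi =>
    ⟨M.toFinset.min'_le i (List.mem_toFinset.2 hi), M.toFinset.le_max' i (List.mem_toFinset.2 hi)⟩
  by_cases hgap : ∃ c, a ≤ c ∧ c + 1 ≤ b ∧ c + 1 ∉ M
  · obtain ⟨c, hac, hcb, hc⟩ := hgap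
    refine split M c hc (ih _ ?_ (hM.filter _) rfl) (ih _ ?_ (hM.filter _) rfl)
    · exact hlen ▸ List.length_filter_lt_length_iff_exists.2 ⟨b, hb, by simp; omega⟩
    · exact hlen ▸ List.length_filter_lt_length_iff_exists.2 ⟨a, ha, by simp; omega⟩
  · push Not at hgap
    refine interval M a b hM (hbounds a ha).2 fun i => ⟨hbounds i, fun ⟨hai, hib⟩ => ?_⟩
    rcases Nat.eq_or_lt_of_le hai with rfl | hlt
    · exact ha
    · obtain ⟨c, rfl⟩ := Nat.exists_eq_add_of_lt hlt
      exact hgap (a + c) (by omega) hib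

section Decomposition

variable {n : ℕ}

theorem exists_map_eq_of_forall_isSimpleTransposition {L : List (Perm (Fin n))}
    (h : ∀ τ ∈ L, IsSimpleTransposition τ) :
    ∃ M : List ℕ, (∀ i ∈ M, i + 1 < n) ∧ M.map (simpleTransposition n) = L := by
  induction L with
  | nil => exact ⟨[], by simp, rfl⟩
  | cons τ L ih =>
    obtain ⟨i, hi, rfl⟩ := isSimpleTransposition_iff.1 (h τ List.mem_cons_self)
    obtain ⟨M, hMn, rfl⟩ := ih fun τ hτ => h τ (List.mem_cons_of_mem _ hτ)
    exact ⟨i :: M, by simpa [hi] using hMn, rfl⟩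

theorem isProdOfDistinctSimpleTranspositions_iff {σ : Perm (Fin n)} :
    IsProdOfDistinctSimpleTranspositions σ ↔
      ∃ M : List ℕ, M.Nodup ∧ (∀ i ∈ M, i + 1 < n) ∧ prodSimpleTranspositions n M = σ := by
  constructor
  · rintro ⟨L, hL, hsimp, rfl⟩
    obtain ⟨M, hMn, rfl⟩ := exists_map_eq_of_forall_isSimpleTransposition hsimp
    exact ⟨M, hL.of_map _, hMn, rfl⟩
  · rintro ⟨M, hM, hMn, rfl⟩
    refine ⟨M.map (simpleTransposition n),
      hM.map_on fun i hi j hj => simpleTransposition_injOn (hMn i hi) (hMn j hj), ?_, rfl⟩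
    simp only [List.mem_map]
    rintro _ ⟨i, hi, rfl⟩
    exact isSimpleTransposition_iff.2 ⟨i, hMn i hi, rfl⟩

theorem support_simpleTransposition_subset_support_prod {M : List ℕ} (hM : M.Nodup)
    (hMn : ∀ i ∈ M, i + 1 < n) {i : ℕ} (hi : i ∈ M) :
    (simpleTransposition n i).support ⊆ (prodSimpleTranspositions n M).support := by
  revert hMn i
  refine List.Nodup.induction_on_gaps hM ?_ (fun M a b hM hab hMab => ?_)
    (fun M c hc ih₁ ih₂ => ?_) <;> intro hMn i hi
  · simp at hi
  · have hmoves := (isCycle_prodSimpleTranspositions_of_interval hab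
      (hMn b ((hMab b).2 ⟨hab, le_rfl⟩)) hM hMab).2
    intro x hx
    rw [mem_support, simpleTransposition_apply_ne_self_iff (hMn i hi)] at hx
    rw [mem_support, hmoves]
    have := (hMab i).1 hi
    omega
  · rw [← prodSimpleTranspositions_filter_mul hc,
      (disjoint_prodSimpleTranspositions_filter c M).support_mul]
    by_cases hic : i ≤ c
    · exact (ih₁ (fun j hj => hMn j (List.mem_of_mem_filter hj))
        (List.mem_filter.2 ⟨hi, by simpa using hic⟩)).trans Finset.subset_union_left
    · have : i ≠ c + 1 := fun h => hc (h ▸ hi)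
      exact (ih₂ (fun j hj => hMn j (List.mem_of_mem_filter hj))
        (List.mem_filter.2 ⟨hi, by simp; omega⟩)).trans Finset.subset_union_right

theorem isProdOfDistinctSimpleTranspositions_of_mem_cycleFactorsFinset {M : List ℕ}
    (hM : M.Nodup) (hMn : ∀ i ∈ M, i + 1 < n) {τ : Perm (Fin n)}
    (hτ : τ ∈ (prodSimpleTranspositions n M).cycleFactorsFinset) :
    IsProdOfDistinctSimpleTranspositions τ := by
  revert hMn τ
  refine List.Nodup.induction_on_gaps hM ?_ (fun M a b hM hab hMab => ?_)
    (fun M c hc ih₁ ih₂ => ?_) <;> intro hMn τ hτ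
  · simp at hτ
  · have hcycle := (isCycle_prodSimpleTranspositions_of_interval hab
      (hMn b ((hMab b).2 ⟨hab, le_rfl⟩)) hM hMab).1
    rw [hcycle.cycleFactorsFinset_eq_singleton, Finset.mem_singleton] at hτ
    exact hτ ▸ isProdOfDistinctSimpleTranspositions_iff.2 ⟨M, hM, hMn, rfl⟩
  · rw [← prodSimpleTranspositions_filter_mul hc,
      (disjoint_prodSimpleTranspositions_filter c M).cycleFactorsFinset_mul_eq_union,
      Finset.mem_union] at hτ
    rcases hτ with hτ | hτ
    · exact ih₁ (fun j hj => hMn j (List.mem_of_mem_filter hj)) hτ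
    · exact ih₂ (fun j hj => hMn j (List.mem_of_mem_filter hj)) hτ

end Decomposition

theorem IsProdOfDistinctSimpleTranspositions.mul_of_disjoint {n : ℕ} {f g : Perm (Fin n)}
    (hf : IsProdOfDistinctSimpleTranspositions f) (hg : IsProdOfDistinctSimpleTranspositions g)
    (hfg : Disjoint f g) : IsProdOfDistinctSimpleTranspositions (f * g) := by
  obtain ⟨M, hM, hMn, rfl⟩ := isProdOfDistinctSimpleTranspositions_iff.1 hf
  obtain ⟨N, hN, hNn, rfl⟩ := isProdOfDistinctSimpleTranspositions_iff.1 hg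
  refine isProdOfDistinctSimpleTranspositions_iff.2 ⟨M ++ N, List.nodup_append.2 ⟨hM, hN, ?_⟩,
    fun i hi => (List.mem_append.1 hi).elim (hMn i) (hNn i), prodSimpleTranspositions_append M N⟩
  rintro i hiM _ hiN rfl
  -- a simple transposition occurring in both words would move a point moved by both `f` and `g`
  have hx : (⟨i, Nat.lt_of_succ_lt (hMn i hiM)⟩ : Fin n) ∈ (simpleTransposition n i).support :=
    mem_support.2 ((simpleTransposition_apply_ne_self_iff (hMn i hiM)).2 (Or.inl rfl))
  exact Finset.disjoint_left.1 hfg.disjoint_support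
    (support_simpleTransposition_subset_support_prod hM hMn hiM hx)
    (support_simpleTransposition_subset_support_prod hN hNn hiN hx)

theorem isProdOfDistinctSimpleTranspositions_list_prod {n : ℕ} {l : List (Perm (Fin n))}
    (hl : l.Pairwise Disjoint) (h : ∀ τ ∈ l, IsProdOfDistinctSimpleTranspositions τ) :
    IsProdOfDistinctSimpleTranspositions l.prod := by
  induction l with
  | nil => exact ⟨[], List.nodup_nil, by simp, rfl⟩
  | cons τ l ih =>
    rw [List.pairwise_cons] at hl
    rw [List.prod_cons]
    exact (h τ List.mem_cons_self).mul_of_disjoint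
      (ih hl.2 fun τ' hτ' => h τ' (List.mem_cons_of_mem τ hτ')) (disjoint_prod_right l hl.1)

/-- If σ = σ₁ ⋯ σ_r is a product of pairwise disjoint cycles, then σ is a product
of pairwise distinct simple transpositions if and only if each σᵢ is. -/
theorem prodDistinctSimpleTranspositions_iff_of_disjoint_cycles (n : ℕ)
    (σ : Equiv.Perm (Fin n)) (l : List (Equiv.Perm (Fin n)))
    (hc : ∀ τ ∈ l, τ.IsCycle) (hd : l.Pairwise Equiv.Perm.Disjoint)
    (hσ : σ = l.prod) :
    IsProdOfDistinctSimpleTranspositions σ ↔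
      ∀ τ ∈ l, IsProdOfDistinctSimpleTranspositions τ := by
  have hfactors : σ.cycleFactorsFinset = l.toFinset :=
    (cycleFactorsFinset_eq_list_toFinset (nodup_of_pairwise_disjoint_cycles hc hd)).2
      ⟨hc, hd, hσ.symm⟩
  constructor
  · intro h τ hτ
    obtain ⟨M, hM, hMn, rfl⟩ := isProdOfDistinctSimpleTranspositions_iff.1 h
    exact isProdOfDistinctSimpleTranspositions_of_mem_cycleFactorsFinset hM hMn
      (hfactors ▸ List.mem_toFinset.2 hτ)
  · intro h
    exact hσ ▸ isProdOfDistinctSimpleTranspositions_list_prod hd h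
end
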